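/- arXiv:1602.02015 — 8 statements merged into one kernel-verified Lean document; each statement's English description precedes it below -/
import Mathlib

section
/- For every real τ, |1/Γ(1 + iτ)| ≤ (1 + τ²)^{-1/4} · e^{π|τ|/2}. -/
open scoped Real

/-!
Euler's reflection formula gives `‖1 / Γ(1 + iτ)‖² = sinh(πτ) / (πτ)`. With `x = π|τ|`, the
inequality `tanh x ≤ x` rearranges to `(1 + x) sinh x ≤ x eˣ`, so
`sinh x / x ≤ eˣ / (1 + x) ≤ eˣ / √(1 + τ²)`, which is the square of the right-hand side.
-/

namespace Real

theorem sinh_le_mul_cosh {x : ℝ} (hx : 0 ≤ x) : sinh x ≤ x * cosh x := by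
  have hderiv (y : ℝ) : HasDerivAt (fun y => y * cosh y - sinh y) (y * sinh y) y :=
    (((hasDerivAt_id' y).fun_mul (hasDerivAt_cosh y)).fun_sub (hasDerivAt_sinh y)).congr_deriv
      (by ring)
  have hmono : MonotoneOn (fun y => y * cosh y - sinh y) (Set.Ici 0) := by
    refine monotoneOn_of_deriv_nonneg (convex_Ici 0) (by fun_prop) (by fun_prop) fun y hy => ?_
    rw [interior_Ici, Set.mem_Ioi] at hy
    rw [(hderiv y).deriv]
    exact mul_nonneg hy.le (sinh_nonneg_iff.mpr hy.le)
  simpa using hmono Set.self_mem_Ici hx hx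

theorem sinh_div_self_le_exp_abs_div (x : ℝ) : sinh x / x ≤ exp |x| / (1 + |x|) := by
  have heven : sinh x / x = sinh |x| / |x| := by
    rcases abs_choice x with h | h <;> simp [h, sinh_neg, neg_div_neg_eq]
  rw [heven]
  set y := |x|
  have hy : 0 ≤ y := abs_nonneg x
  rcases hy.eq_or_lt with h0 | hpos
  · simp [← h0]
  rw [div_le_div_iff₀ hpos (by positivity), ← cosh_add_sinh]
  linarith [sinh_le_mul_cosh hy]

end Real

namespace Complex

theorem Gamma_one_add_mul_Gamma_one_sub {z : ℂ} (hz : z ≠ 0) :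
    Gamma (1 + z) * Gamma (1 - z) = π * z / sin (π * z) := by
  rw [add_comm, Gamma_add_one z hz, mul_assoc, Gamma_mul_Gamma_one_sub]
  ring

theorem norm_Gamma_one_add_mul_I_sq {t : ℝ} (ht : t ≠ 0) :
    ‖Gamma (1 + t * I)‖ ^ 2 = π * t / Real.sinh (π * t) := by
  have hconj : (starRingEnd ℂ) (1 + t * I) = 1 - t * I := by simp [sub_eq_add_neg]
  have key : ((‖Gamma (1 + t * I)‖ ^ 2 : ℝ) : ℂ) = π * (t * I) / sin (π * (t * I)) := by
    rw [ofReal_pow, ← mul_conj', ← Gamma_conj, hconj,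
      Gamma_one_add_mul_Gamma_one_sub (by simpa using ht)]
  rw [show (π : ℂ) * (t * I) = (π * t : ℝ) * I by push_cast; ring, sin_mul_I, ← ofReal_sinh,
    mul_div_mul_right _ _ I_ne_zero, ← ofReal_div] at key
  exact_mod_cast key

theorem norm_one_div_Gamma_one_add_mul_I_sq {t : ℝ} (ht : t ≠ 0) :
    ‖1 / Gamma (1 + t * I)‖ ^ 2 = Real.sinh (π * t) / (π * t) := by
  rw [norm_div, norm_one, div_pow, one_pow, norm_Gamma_one_add_mul_I_sq ht, one_div_div]

end Complex

theorem abs_one_div_gamma_one_add_I_le (τ : ℝ) :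
    ‖(1 / Complex.Gamma (1 + τ * Complex.I))‖ ≤
      (1 + τ ^ 2) ^ (-(1 / 4) : ℝ) * Real.exp (π * |τ| / 2) := by
  rcases eq_or_ne τ 0 with rfl | hτ
  · norm_num
  have hbase : 0 < 1 + τ ^ 2 := by positivity
  have hsqrt : √(1 + τ ^ 2) ≤ 1 + π * |τ| := by
    rw [Real.sqrt_le_iff]
    refine ⟨by positivity, ?_⟩
    nlinarith [Real.pi_gt_three, abs_nonneg τ, sq_abs τ,
      mul_le_mul_of_nonneg_right Real.pi_gt_three.le (sq_nonneg |τ|)]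
  have hrhs_sq : ((1 + τ ^ 2) ^ (-(1 / 4) : ℝ) * Real.exp (π * |τ| / 2)) ^ 2
      = Real.exp (π * |τ|) / √(1 + τ ^ 2) := by
    rw [mul_pow, ← Real.rpow_natCast, ← Real.rpow_mul hbase.le, ← Real.exp_nat_mul,
      Real.sqrt_eq_rpow, div_eq_mul_inv _ ((1 + τ ^ 2) ^ _), ← Real.rpow_neg hbase.le]
    ring_nf
  rw [← sq_le_sq₀ (norm_nonneg _) (by positivity), hrhs_sq,
    Complex.norm_one_div_Gamma_one_add_mul_I_sq hτ]
  calc Real.sinh (π * τ) / (π * τ) ≤ Real.exp (π * |τ|) / (1 + π * |τ|) := by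
        simpa [abs_mul, abs_of_pos Real.pi_pos] using Real.sinh_div_self_le_exp_abs_div (π * τ)
    _ ≤ Real.exp (π * |τ|) / √(1 + τ ^ 2) := by gcongr
end

section
/- Let φ be an integrable log-concave function on [τ, ∞), let p > 0, set S₀ = ∫_τ^∞ φ(s) ds and S_p = ∫_τ^∞ (s-τ)^p φ(s) ds, and assume S_p > 0. Then φ(τ)^p ≤ Γ(p+1) · S₀^{p+1} / S_p. -/
/-!
Let `g s = φ τ * exp (-(r * (s - τ)))` with `r = φ τ / S₀`: the exponential profile with the same
value at `τ` and the same mass as `φ`. Log-concavity of `φ` and log-affinity of `g` force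
`{s | g s ≤ φ s}` to be an initial segment of `[τ, ∞)`, so `φ - g` changes sign once, from `+`
to `-`, and has integral zero. Hence `∫ w φ ≤ ∫ w g` for every nondecreasing weight `w`, and
for `w s = (s - τ) ^ p` the right-hand side is the Gamma integral `Γ(p + 1) S₀ ^ (p + 1) / φ τ ^ p`.
-/

open MeasureTheory Set Real

section SingleCrossing

variable {α : Type*} [MeasurableSpace α] {μ : Measure α} {S : Set α}

theorem setIntegral_mul_le_of_single_crossing [LinearOrder α] (hS : MeasurableSet S) {w f g : α → ℝ}
    (hw : MonotoneOn w S) (hcross : ∀ s ∈ S, ∀ t ∈ S, s ≤ t → g t ≤ f t → g s ≤ f s)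
    (hf : IntegrableOn f S μ) (hg : IntegrableOn g S μ)
    (hwf : IntegrableOn (fun x ↦ w x * f x) S μ) (hwg : IntegrableOn (fun x ↦ w x * g x) S μ)
    (hfg : ∫ x in S, f x ∂μ = ∫ x in S, g x ∂μ) :
    ∫ x in S, w x * f x ∂μ ≤ ∫ x in S, w x * g x ∂μ := by
  have of_ae_eq : f =ᵐ[μ.restrict S] g → ∫ x in S, w x * f x ∂μ ≤ ∫ x in S, w x * g x ∂μ :=
    fun h ↦ (integral_congr_ae (h.mono fun x hx ↦ congrArg (w x * ·) hx)).le
  by_cases hpos : ∃ s ∈ S, g s < f s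
  swap
  · push Not at hpos
    exact of_ae_eq ((integral_eq_iff_of_ae_le hf hg (ae_restrict_of_forall_mem hS hpos)).1 hfg)
  by_cases hneg : ∃ t ∈ S, f t < g t
  swap
  · push Not at hneg
    exact of_ae_eq ((integral_eq_iff_of_ae_le hg hf (ae_restrict_of_forall_mem hS hneg)).1
      hfg.symm).symm
  obtain ⟨s₀, hs₀, hfs₀⟩ := hpos
  obtain ⟨t₀, ht₀, hft₀⟩ := hneg
  have hlt : ∀ s ∈ S, ∀ t ∈ S, g s < f s → f t < g t → s < t := fun s hs t ht hfs hft ↦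
    lt_of_not_ge fun hts ↦ (hcross t ht s hs hts hfs.le).not_gt hft
  -- every point where `f > g` lies left of every point where `f < g`, so `m` separates
  -- the values of `w` on the two sets
  set P := w '' {s ∈ S | g s < f s}
  have hP : BddAbove P :=
    ⟨w t₀, forall_mem_image.2 fun s ⟨hs, hfs⟩ ↦ hw hs ht₀ (hlt s hs t₀ ht₀ hfs hft₀).le⟩
  set m := sSup P
  have hsign : ∀ x ∈ S, (w x - m) * (f x - g x) ≤ 0 := by
    intro x hx
    rcases lt_trichotomy (g x) (f x) with h | h | h
    · exact mul_nonpos_of_nonpos_of_nonneg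
        (sub_nonpos.2 (le_csSup hP ⟨x, ⟨hx, h⟩, rfl⟩)) (sub_nonneg.2 h.le)
    · simp [h]
    · refine mul_nonpos_of_nonneg_of_nonpos (sub_nonneg.2 (csSup_le ⟨_, mem_image_of_mem w
        ⟨hs₀, hfs₀⟩⟩ (forall_mem_image.2 fun s ⟨hs, hfs⟩ ↦ ?_))) (sub_nonpos.2 h.le)
      exact hw hs hx (hlt s hs x hx hfs h).le
  have hexpand : ∫ x in S, (w x - m) * (f x - g x) ∂μ =
      (∫ x in S, w x * f x ∂μ - ∫ x in S, w x * g x ∂μ) -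
        m * (∫ x in S, f x ∂μ - ∫ x in S, g x ∂μ) := by
    have hdiff : IntegrableOn (fun x ↦ w x * f x - w x * g x) S μ := hwf.sub hwg
    have hmdiff : IntegrableOn (fun x ↦ m * (f x - g x)) S μ := (hf.sub hg).const_mul m
    simp_rw [show ∀ x, (w x - m) * (f x - g x) = (w x * f x - w x * g x) - m * (f x - g x)
      from fun x ↦ by ring]
    rw [integral_sub hdiff hmdiff, integral_sub hwf hwg, integral_const_mul, integral_sub hf hg]
  have := setIntegral_nonpos (μ := μ) hS hsign
  rwa [hexpand, hfg, sub_self, mul_zero, sub_zero, sub_nonpos] at this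

theorem setIntegral_pos_of_setIntegral_mul_ne_zero (hS : MeasurableSet S) {w f : α → ℝ}
    (hf₀ : ∀ x ∈ S, 0 ≤ f x) (hf : IntegrableOn f S μ) (hwf : ∫ x in S, w x * f x ∂μ ≠ 0) :
    0 < ∫ x in S, f x ∂μ := by
  refine (setIntegral_nonneg hS hf₀).lt_of_ne fun h ↦ hwf ?_
  have hf_ae : f =ᵐ[μ.restrict S] 0 :=
    (integral_eq_zero_iff_of_nonneg_ae (ae_restrict_of_forall_mem hS hf₀) hf).1 h.symm
  simp [integral_congr_ae (hf_ae.mono fun x hx ↦ congrArg (w x * ·) hx)]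

end SingleCrossing

section Shift

variable {E : Type*} [NormedAddCommGroup E]

theorem indicator_Ici_comp_sub {M : Type*} [Zero M] (f : ℝ → M) (τ : ℝ) :
    (Ici τ).indicator (fun s ↦ f (s - τ)) = fun s ↦ (Ici 0).indicator f (s - τ) := by
  ext s
  simp [indicator, sub_nonneg]

theorem setIntegral_Ici_comp_sub [NormedSpace ℝ E] (f : ℝ → E) (τ : ℝ) :
    ∫ s in Ici τ, f (s - τ) = ∫ t in Ici 0, f t := by
  rw [← integral_indicator measurableSet_Ici, ← integral_indicator measurableSet_Ici,
    indicator_Ici_comp_sub, integral_sub_right_eq_self]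

theorem IntegrableOn.comp_sub_Ici {f : ℝ → E} (hf : IntegrableOn f (Ici 0)) (τ : ℝ) :
    IntegrableOn (fun s ↦ f (s - τ)) (Ici τ) := by
  rw [← integrable_indicator_iff measurableSet_Ici, indicator_Ici_comp_sub]
  exact ((integrable_indicator_iff measurableSet_Ici).2 hf).comp_sub_right τ

end Shift

theorem integrableOn_Ici_sub_rpow_mul_exp_neg_mul (τ : ℝ) {q r : ℝ} (hq : -1 < q) (hr : 0 < r) :
    IntegrableOn (fun s ↦ (s - τ) ^ q * exp (-(r * (s - τ)))) (Ici τ) := by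
  refine IntegrableOn.comp_sub_Ici (f := fun t ↦ t ^ q * exp (-(r * t))) ?_ τ
  rw [integrableOn_Ici_iff_integrableOn_Ioi]
  simpa using integrableOn_rpow_mul_exp_neg_mul_rpow hq zero_lt_one hr

theorem integral_Ici_sub_rpow_mul_exp_neg_mul (τ : ℝ) {q r : ℝ} (hq : -1 < q) (hr : 0 < r) :
    ∫ s in Ici τ, (s - τ) ^ q * exp (-(r * (s - τ))) = (1 / r) ^ (q + 1) * Gamma (q + 1) := by
  rw [setIntegral_Ici_comp_sub (fun t ↦ t ^ q * exp (-(r * t))), integral_Ici_eq_integral_Ioi,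
    ← integral_rpow_mul_exp_neg_mul_Ioi (by linarith) hr, add_sub_cancel_right]

theorem integrableOn_Ici_sub_rpow_mul_mul_exp_neg_mul (τ c : ℝ) {q r : ℝ} (hq : -1 < q)
    (hr : 0 < r) : IntegrableOn (fun s ↦ (s - τ) ^ q * (c * exp (-(r * (s - τ))))) (Ici τ) :=
  ((integrableOn_Ici_sub_rpow_mul_exp_neg_mul τ hq hr).const_mul c).congr
    (ae_of_all _ fun _ ↦ mul_left_comm _ _ _)

theorem integral_Ici_sub_rpow_mul_mul_exp_neg_div_mul (τ : ℝ) {q c m : ℝ} (hq : -1 < q)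
    (hc : 0 < c) (hm : 0 < m) :
    ∫ s in Ici τ, (s - τ) ^ q * (c * exp (-(c / m * (s - τ)))) =
      Gamma (q + 1) * m ^ (q + 1) / c ^ q := by
  simp_rw [mul_left_comm _ c]
  rw [integral_const_mul, integral_Ici_sub_rpow_mul_exp_neg_mul τ hq (div_pos hc hm), one_div_div,
    div_rpow hm.le hc.le, rpow_add_one hc.ne']
  field_simp

theorem integral_Ici_mul_exp_neg_div_mul (τ : ℝ) {c m : ℝ} (hc : 0 < c) (hm : 0 < m) :
    ∫ s in Ici τ, c * exp (-(c / m * (s - τ))) = m := by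
  simpa using integral_Ici_sub_rpow_mul_mul_exp_neg_div_mul τ neg_one_lt_zero hc hm

def LogConcaveOn (S : Set ℝ) (φ : ℝ → ℝ) : Prop :=
  ∀ x ∈ S, ∀ y ∈ S, ∀ α ∈ Icc (0 : ℝ) 1, φ x ^ (1 - α) * φ y ^ α ≤ φ ((1 - α) * x + α * y)

theorem LogConcaveOn.mul_exp_le_of_le {S : Set ℝ} {φ : ℝ → ℝ} (hφ : LogConcaveOn S φ)
    {x t c r s : ℝ} (hx : x ∈ S) (ht : t ∈ S) (hc : 0 ≤ c) (hcx : c ≤ φ x) (hxs : x ≤ s)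
    (hst : s ≤ t) (hct : c * exp (-(r * (t - x))) ≤ φ t) :
    c * exp (-(r * (s - x))) ≤ φ s := by
  rcases (hxs.trans hst).eq_or_lt with rfl | hxt
  · rwa [le_antisymm hst hxs]
  set α := (s - x) / (t - x)
  have hαt : α * (t - x) = s - x := div_mul_cancel₀ _ (sub_pos.2 hxt).ne'
  have hα : α ∈ Icc (0 : ℝ) 1 :=
    ⟨div_nonneg (sub_nonneg.2 hxs) (sub_pos.2 hxt).le, (div_le_one (sub_pos.2 hxt)).2 (by linarith)⟩
  have hs : (1 - α) * x + α * t = s := by linear_combination hαt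
  calc c * exp (-(r * (s - x)))
      = c ^ (1 - α) * (c * exp (-(r * (t - x)))) ^ α := by
        rw [mul_rpow hc (exp_pos _).le, ← exp_mul, ← mul_assoc, ← rpow_add' hc (by simp),
          sub_add_cancel, rpow_one, ← hαt]
        ring_nf
    _ ≤ φ x ^ (1 - α) * φ t ^ α := by
        have hφx : 0 ≤ φ x := hc.trans hcx
        gcongr
        linarith [hα.2]
    _ ≤ φ s := hs ▸ hφ x hx t ht α hα

theorem LogConcaveOn.setIntegral_Ici_mul_le_mul_exp {τ r : ℝ} {φ w : ℝ → ℝ}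
    (hφ : LogConcaveOn (Ici τ) φ) (hφτ : 0 ≤ φ τ) (hr : 0 < r)
    (hmass : ∫ s in Ici τ, φ τ * exp (-(r * (s - τ))) = ∫ s in Ici τ, φ s)
    (hw : MonotoneOn w (Ici τ)) (hφi : IntegrableOn φ (Ici τ))
    (hwφ : IntegrableOn (fun s ↦ w s * φ s) (Ici τ))
    (hwg : IntegrableOn (fun s ↦ w s * (φ τ * exp (-(r * (s - τ))))) (Ici τ)) :
    ∫ s in Ici τ, w s * φ s ≤ ∫ s in Ici τ, w s * (φ τ * exp (-(r * (s - τ)))) := by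
  have hg : IntegrableOn (fun s ↦ φ τ * exp (-(r * (s - τ)))) (Ici τ) := by
    simpa using integrableOn_Ici_sub_rpow_mul_mul_exp_neg_mul τ (φ τ) neg_one_lt_zero hr
  refine setIntegral_mul_le_of_single_crossing measurableSet_Ici hw
    (fun s hs t ht hst hgt ↦ hφ.mul_exp_le_of_le self_mem_Ici ht hφτ le_rfl hs hst hgt)
    hφi hg hwφ hwg hmass.symm

theorem logconcave_value_le_gamma_moments
    (τ p : ℝ) (hp : 0 < p) (φ : ℝ → ℝ)
    (hnn : ∀ s ∈ Set.Ici τ, 0 ≤ φ s)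
    (hlc : ∀ x ∈ Set.Ici τ, ∀ y ∈ Set.Ici τ, ∀ α ∈ Set.Icc (0:ℝ) 1,
      φ x ^ (1 - α) * φ y ^ α ≤ φ ((1 - α) * x + α * y))
    (hint : IntegrableOn φ (Set.Ici τ))
    (hSp : 0 < ∫ s in Set.Ici τ, (s - τ) ^ p * φ s) :
    φ τ ^ p ≤ Real.Gamma (p + 1) * (∫ s in Set.Ici τ, φ s) ^ (p + 1) /
      ∫ s in Set.Ici τ, (s - τ) ^ p * φ s := by
  set S₀ := ∫ s in Ici τ, φ s
  set Sₚ := ∫ s in Ici τ, (s - τ) ^ p * φ s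
  have hS₀ : 0 < S₀ := setIntegral_pos_of_setIntegral_mul_ne_zero measurableSet_Ici hnn hint hSp.ne'
  rcases (hnn τ self_mem_Ici).eq_or_lt with hc | hc
  · rw [← hc, zero_rpow hp.ne']
    positivity
  set c := φ τ
  have hwφ : IntegrableOn (fun s ↦ (s - τ) ^ p * φ s) (Ici τ) := by
    by_contra h
    exact hSp.ne' (integral_undef h)
  have hr : 0 < c / S₀ := div_pos hc hS₀
  have key : Sₚ ≤ ∫ s in Ici τ, (s - τ) ^ p * (c * exp (-(c / S₀ * (s - τ)))) :=
    LogConcaveOn.setIntegral_Ici_mul_le_mul_exp hlc hc.le hr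
      (integral_Ici_mul_exp_neg_div_mul τ hc hS₀)
      (fun s hs t _ hst ↦ rpow_le_rpow (sub_nonneg.2 hs) (by linarith) hp.le) hint hwφ
      (integrableOn_Ici_sub_rpow_mul_mul_exp_neg_mul τ c (by linarith) hr)
  rw [integral_Ici_sub_rpow_mul_mul_exp_neg_div_mul τ (by linarith) hc hS₀,
    le_div_iff₀ (rpow_pos_of_pos hc p)] at key
  rw [le_div_iff₀ hSp]
  linarith
end

section
/- If φ is a symmetric (even) log-concave probability density on ℝ with variance σ² = ∫ s² φ(s) ds, then 1/(12 σ²) ≤ φ(0)² ≤ 1/(2 σ²), and φ(0) = max_{s∈ℝ} φ(s). -/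
/-!
Log-concavity at `s` and `-s` gives `φ s ≤ φ 0 =: M`. Both bounds on `σ²` then come from one
comparison: if `∫ f = ∫ g` and `(s² - c) (f s - g s) ≥ 0` for a constant `c`, so that the two
densities cross once on each side of `0`, then `∫ s² g ≤ ∫ s² f`. Because `φ ≤ M`, `φ` crosses the
uniform density of height `M` on `[-1/(2M), 1/(2M)]`, of variance `1/(12 M²)`, in this way. For
the upper bound compare with the Laplace density `M e^{-2M|s|}`, of variance `1/(2 M²)`: it is
log-affine on `[0, ∞)` and agrees with `φ` at `0`, so by log-concavity the set where it lies
below `φ` is a symmetric interval.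
-/

open MeasureTheory Set Real

theorem integral_mul_le_integral_mul_of_crossing {α : Type*} [MeasurableSpace α] {μ : Measure α}
    {w f g : α → ℝ} (c : ℝ) (hf : Integrable f μ) (hg : Integrable g μ)
    (hwf : Integrable (fun x => w x * f x) μ) (hwg : Integrable (fun x => w x * g x) μ)
    (hmass : ∫ x, f x ∂μ = ∫ x, g x ∂μ) (hcross : ∀ᵐ x ∂μ, 0 ≤ (w x - c) * (f x - g x)) :
    ∫ x, w x * g x ∂μ ≤ ∫ x, w x * f x ∂μ := by
  have hwdiff : Integrable (fun x => w x * f x - w x * g x) μ := hwf.sub hwg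
  have hcdiff : Integrable (fun x => c * (f x - g x)) μ := (hf.sub hg).const_mul c
  have hexpand : ∫ x, (w x - c) * (f x - g x) ∂μ
      = (∫ x, w x * f x ∂μ - ∫ x, w x * g x ∂μ) - c * (∫ x, f x ∂μ - ∫ x, g x ∂μ) := by
    rw [← integral_sub hwf hwg, ← integral_sub hf hg, ← integral_const_mul,
      ← integral_sub hwdiff hcdiff]
    congr 1 with x
    ring
  have hnonneg := integral_nonneg_of_ae hcross
  rw [hexpand, hmass] at hnonneg
  linarith

def IsLogConcave (φ : ℝ → ℝ) : Prop :=
  ∀ x y : ℝ, ∀ α ∈ Icc (0 : ℝ) 1, φ x ^ (1 - α) * φ y ^ α ≤ φ ((1 - α) * x + α * y)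

namespace IsLogConcave

variable {φ : ℝ → ℝ}

theorem le_apply_zero (hφ : IsLogConcave φ) (hnn : ∀ s, 0 ≤ φ s) (heven : ∀ s, φ (-s) = φ s)
    (s : ℝ) : φ s ≤ φ 0 := by
  have h := hφ s (-s) (1 / 2) ⟨by norm_num, by norm_num⟩
  rwa [heven, show (1 : ℝ) - 1 / 2 = 1 / 2 by norm_num, ← sqrt_eq_rpow, mul_self_sqrt (hnn s),
    show 1 / 2 * s + 1 / 2 * -s = (0 : ℝ) by ring] at h

theorem convex_setOf_mul_exp_le (hφ : IsLogConcave φ) {r : ℝ} (hr : 0 < r) (k : ℝ) :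
    Convex ℝ {s | r * exp (k * s) ≤ φ s} := by
  intro x hx y hy a b ha hb hab
  obtain rfl : a = 1 - b := by linarith
  have hinterp : (r * exp (k * x)) ^ (1 - b) * (r * exp (k * y)) ^ b
      = r * exp (k * ((1 - b) * x + b * y)) := by
    rw [mul_rpow hr.le (exp_pos _).le, mul_rpow hr.le (exp_pos _).le, ← exp_mul, ← exp_mul,
      mul_mul_mul_comm, ← rpow_add hr, sub_add_cancel, rpow_one, ← exp_add]
    congr 2
    ring
  have hφx : 0 ≤ φ x := (mul_pos hr (exp_pos _)).le.trans hx
  calc r * exp (k * ((1 - b) * x + b * y))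
      = (r * exp (k * x)) ^ (1 - b) * (r * exp (k * y)) ^ b := hinterp.symm
    _ ≤ φ x ^ (1 - b) * φ y ^ b := by
      gcongr
      exacts [hx, hy]
    _ ≤ φ ((1 - b) * x + b * y) := hφ x y b ⟨hb, by linarith⟩

end IsLogConcave

open scoped Nat in
theorem integral_pow_mul_exp_neg_mul_Ioi (n : ℕ) {r : ℝ} (hr : 0 < r) :
    ∫ t in Ioi (0 : ℝ), t ^ n * exp (-(r * t)) = n ! / r ^ (n + 1) := by
  have h := integral_rpow_mul_exp_neg_mul_Ioi (a := n + 1) (by positivity) hr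
  rw [add_sub_cancel_right, Gamma_nat_eq_factorial, div_rpow zero_le_one hr.le, one_rpow,
    ← Nat.cast_add_one, rpow_natCast] at h
  simp_rw [rpow_natCast] at h
  rw [h, one_div_mul_eq_div]

/-- The centred Laplace density of scale `1 / (2 * M)`, whose value at `0` is `M`. -/
noncomputable def laplaceDensity (M s : ℝ) : ℝ := M * exp (-(2 * M * |s|))

theorem integral_laplaceDensity {M : ℝ} (hM : 0 < M) : ∫ s, laplaceDensity M s = 1 := by
  have h := integral_comp_abs (f := fun t => M * exp (-(2 * M * t)))
  have hexp := integral_pow_mul_exp_neg_mul_Ioi 0 (by positivity : 0 < 2 * M)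
  simp only [pow_zero, one_mul, Nat.factorial_zero, Nat.cast_one, zero_add, pow_one] at hexp
  unfold laplaceDensity
  rw [h, integral_const_mul, hexp]
  field_simp

theorem integral_sq_mul_laplaceDensity {M : ℝ} (hM : 0 < M) :
    ∫ s, s ^ 2 * laplaceDensity M s = 1 / (2 * M ^ 2) := by
  have h := integral_comp_abs (f := fun t => M * (t ^ 2 * exp (-(2 * M * t))))
  simp only [sq_abs] at h
  unfold laplaceDensity
  simp_rw [mul_left_comm _ M]
  rw [h, integral_const_mul, integral_pow_mul_exp_neg_mul_Ioi 2 (by positivity)]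
  norm_num
  field_simp

theorem integral_indicator_Icc_neg_const {a : ℝ} (ha : 0 ≤ a) (M : ℝ) :
    ∫ s, (Icc (-a) a).indicator (fun _ => M) s = 2 * a * M := by
  rw [integral_indicator measurableSet_Icc, setIntegral_const, volume_real_Icc, smul_eq_mul,
    max_eq_left (by linarith)]
  ring

theorem integral_sq_mul_indicator_Icc_neg_const {a : ℝ} (ha : 0 ≤ a) (M : ℝ) :
    ∫ s, s ^ 2 * (Icc (-a) a).indicator (fun _ => M) s = 2 * a ^ 3 * M / 3 := by
  simp_rw [← indicator_mul_right _ (fun s : ℝ => s ^ 2)]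
  rw [integral_indicator measurableSet_Icc, integral_Icc_eq_integral_Ioc,
    ← intervalIntegral.integral_of_le (by linarith), intervalIntegral.integral_mul_const,
    integral_pow]
  ring

theorem exists_crossing_of_abs_le {μ : Measure ℝ} {f g : ℝ → ℝ} (hf : Integrable f μ)
    (hg : Integrable g μ) (hmass : ∫ s, f s ∂μ = ∫ s, g s ∂μ) (h0 : g 0 ≤ f 0)
    (hmono : ∀ v t, |v| ≤ |t| → g t ≤ f t → g v ≤ f v) :
    ∃ c, ∀ᵐ s ∂μ, 0 ≤ (s ^ 2 - c) * (g s - f s) := by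
  set B := (fun t => |t|) '' {t | g t ≤ f t}
  have hB : |0| ∈ B := ⟨0, h0, rfl⟩
  by_cases hbdd : BddAbove B
  · refine ⟨sSup B ^ 2, .of_forall fun s => ?_⟩
    have hB0 : 0 ≤ sSup B := by simpa using le_csSup hbdd hB
    rcases lt_trichotomy |s| (sSup B) with hlt | heq | hgt
    · obtain ⟨_, ⟨t, ht, rfl⟩, hst⟩ := exists_lt_of_lt_csSup ⟨_, hB⟩ hlt
      have hs : s ^ 2 ≤ sSup B ^ 2 := sq_le_sq.2 (by rw [abs_of_nonneg hB0]; exact hlt.le)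
      exact mul_nonneg_of_nonpos_of_nonpos (by linarith) (sub_nonpos.2 (hmono s t hst.le ht))
    · rw [← sq_abs s, heq, sub_self, zero_mul]
    · have hfg : f s < g s := not_le.1 fun hs => (le_csSup hbdd ⟨s, hs, rfl⟩).not_gt hgt
      have hs : sSup B ^ 2 ≤ s ^ 2 := sq_le_sq.2 (by rw [abs_of_nonneg hB0]; exact hgt.le)
      exact mul_nonneg (by linarith) (by linarith)
  · have hle : ∀ s, g s ≤ f s := fun s => by
      obtain ⟨_, ⟨t, ht, rfl⟩, hst⟩ := not_bddAbove_iff.1 hbdd |s|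
      exact hmono s t hst.le ht
    have hae : g =ᵐ[μ] f := (integral_eq_iff_of_ae_le hg hf (.of_forall hle)).1 hmass.symm
    exact ⟨0, hae.mono fun s hs => by rw [hs, sub_self, mul_zero]⟩

theorem one_div_twelve_mul_sq_le_integral_sq_mul_of_le {φ : ℝ → ℝ} {M : ℝ} (hM : 0 < M)
    (hnn : ∀ s, 0 ≤ φ s) (hle : ∀ s, φ s ≤ M) (hint : Integrable φ) (hmass : ∫ s, φ s = 1)
    (hmom : Integrable fun s => s ^ 2 * φ s) : 1 / (12 * M ^ 2) ≤ ∫ s, s ^ 2 * φ s := by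
  set a := 1 / (2 * M) with ha_def
  have ha : 0 ≤ a := by positivity
  set u := (Icc (-a) a).indicator fun _ => M
  have hu_mass : ∫ s, u s = 1 := by
    rw [integral_indicator_Icc_neg_const ha, ha_def]
    field_simp
  have hu_mom : ∫ s, s ^ 2 * u s = 1 / (12 * M ^ 2) := by
    rw [integral_sq_mul_indicator_Icc_neg_const ha, ha_def]
    field_simp
    ring
  have hcross : ∀ s, 0 ≤ (s ^ 2 - a ^ 2) * (φ s - u s) := by
    intro s
    by_cases hs : s ∈ Icc (-a) a
    · have hsa : s ^ 2 ≤ a ^ 2 := sq_le_sq' hs.1 hs.2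
      rw [show u s = M from indicator_of_mem hs _]
      exact mul_nonneg_of_nonpos_of_nonpos (by linarith) (by linarith [hle s])
    · have has : a ^ 2 ≤ s ^ 2 :=
        sq_le_sq.2 (by rw [abs_of_nonneg ha]; exact (not_le.1 (mt abs_le.1 hs)).le)
      rw [show u s = 0 from indicator_of_notMem hs _]
      exact mul_nonneg (by linarith) (by linarith [hnn s])
  rw [← hu_mom]
  exact integral_mul_le_integral_mul_of_crossing (a ^ 2) hint
    (.of_integral_ne_zero (by simp [hu_mass])) hmom
    (.of_integral_ne_zero (by simp [hu_mom, hM.ne']))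
    (hmass.trans hu_mass.symm) (.of_forall hcross)

namespace IsLogConcave

variable {φ : ℝ → ℝ}

theorem laplaceDensity_le_of_abs_le (hφ : IsLogConcave φ) (heven : ∀ s, φ (-s) = φ s)
    (h0 : 0 < φ 0) {v t : ℝ} (hvt : |v| ≤ |t|) (ht : laplaceDensity (φ 0) t ≤ φ t) :
    laplaceDensity (φ 0) v ≤ φ v := by
  have hS := (hφ.convex_setOf_mul_exp_le h0 (-(2 * φ 0))).ordConnected
  have hmem : ∀ s,
      laplaceDensity (φ 0) s ≤ φ s ↔ |s| ∈ {x | φ 0 * exp (-(2 * φ 0) * x) ≤ φ x} := by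
    intro s
    rcases abs_choice s with h | h <;> simp [laplaceDensity, h, heven]
  rw [hmem] at ht ⊢
  exact hS.out (by simp) ht ⟨abs_nonneg v, hvt⟩

theorem integral_sq_mul_le (hφ : IsLogConcave φ) (heven : ∀ s, φ (-s) = φ s) (h0 : 0 < φ 0)
    (hint : Integrable φ) (hmass : ∫ s, φ s = 1) (hmom : Integrable fun s => s ^ 2 * φ s) :
    ∫ s, s ^ 2 * φ s ≤ 1 / (2 * φ 0 ^ 2) := by
  have hl_int : Integrable (laplaceDensity (φ 0)) :=
    .of_integral_ne_zero (by simp [integral_laplaceDensity h0])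
  have hl_mom : Integrable fun s => s ^ 2 * laplaceDensity (φ 0) s :=
    .of_integral_ne_zero (by simp [integral_sq_mul_laplaceDensity h0, h0.ne'])
  obtain ⟨c, hc⟩ := exists_crossing_of_abs_le hint hl_int
    (by rw [hmass, integral_laplaceDensity h0]) (by simp [laplaceDensity])
    (fun v t => hφ.laplaceDensity_le_of_abs_le heven h0)
  rw [← integral_sq_mul_laplaceDensity h0]
  exact integral_mul_le_integral_mul_of_crossing c hl_int hint hl_mom hmom
    (by rw [hmass, integral_laplaceDensity h0]) hc

end IsLogConcave

theorem symmetric_logconcave_density_value_at_zero_general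
    (φ : ℝ → ℝ) (σ : ℝ)
    (hnn : ∀ s, 0 ≤ φ s)
    (heven : ∀ s, φ (-s) = φ s)
    (hlc : ∀ x y : ℝ, ∀ α ∈ Set.Icc (0:ℝ) 1,
      φ x ^ (1 - α) * φ y ^ α ≤ φ ((1 - α) * x + α * y))
    (hint : Integrable φ)
    (hmass : ∫ s, φ s = 1)
    (hmom : Integrable (fun s => s ^ 2 * φ s))
    (hvar : ∫ s, s ^ 2 * φ s = σ ^ 2) :
    1 / (12 * σ ^ 2) ≤ φ 0 ^ 2 ∧ φ 0 ^ 2 ≤ 1 / (2 * σ ^ 2) ∧ ∀ s, φ s ≤ φ 0 := by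
  have hmax : ∀ s, φ s ≤ φ 0 := IsLogConcave.le_apply_zero hlc hnn heven
  have h0 : 0 < φ 0 := by
    refine (hnn 0).lt_of_ne fun h => ?_
    have hzero : φ = 0 := funext fun s => le_antisymm (h ▸ hmax s : φ s ≤ 0) (hnn s)
    simp [hzero] at hmass
  have hlower := one_div_twelve_mul_sq_le_integral_sq_mul_of_le h0 hnn hmax hint hmass hmom
  have hupper := IsLogConcave.integral_sq_mul_le hlc heven h0 hint hmass hmom
  rw [hvar] at hlower hupper
  have hσ : 0 < σ ^ 2 := lt_of_lt_of_le (by positivity) hlower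
  refine ⟨?_, ?_, hmax⟩
  · rw [div_le_iff₀ (by positivity)] at hlower ⊢
    linarith
  · rw [le_div_iff₀ (by positivity)] at hupper ⊢
    linarith

theorem symmetric_logconcave_density_value_at_zero
    (φ : ℝ → ℝ) (σ : ℝ) (hσ : 0 < σ)
    (hnn : ∀ s, 0 ≤ φ s)
    (heven : ∀ s, φ (-s) = φ s)
    (hlc : ∀ x y : ℝ, ∀ α ∈ Set.Icc (0:ℝ) 1,
      φ x ^ (1 - α) * φ y ^ α ≤ φ ((1 - α) * x + α * y))
    (hint : Integrable φ)
    (hmass : ∫ s, φ s = 1)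
    (hmom : Integrable (fun s => s ^ 2 * φ s))
    (hvar : ∫ s, s ^ 2 * φ s = σ ^ 2) :
    1 / (12 * σ ^ 2) ≤ φ 0 ^ 2 ∧ φ 0 ^ 2 ≤ 1 / (2 * σ ^ 2) ∧ ∀ s, φ s ≤ φ 0 :=
  symmetric_logconcave_density_value_at_zero_general φ σ hnn heven hlc hint hmass hmom hvar
end

section
/- Suppose g is differentiable on ℝ, g(s) → 0 as s → ±∞, and g' is Lebesgue integrable on ℝ. Then for every α > 0, α·∫_ℝ |s|^{α-1} |g(s)| ds ≤ ∫_ℝ |s|^α |g'(s)| ds. -/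
/-!
For `s > 0` the fundamental theorem of calculus on `(s, ∞)` gives `|g s| ≤ ∫_s^∞ |g'|`.
Multiplying by `α s^(α-1)`, integrating over `s > 0` and exchanging the order of integration
(Tonelli) turns the right-hand side into `∫_0^∞ t^α |g' t| dt`, because
`∫_0^t α s^(α-1) ds = t^α`.
The half-line `s < 0` is the same estimate for `s ↦ g (-s)`.
-/

open MeasureTheory Set Filter Topology
open scoped ENNReal

theorem enorm_le_setLIntegral_Ioi_enorm_of_tendsto_atTop {E : Type*} [NormedAddCommGroup E]
    [NormedSpace ℝ E] [CompleteSpace E] {g g' : ℝ → E} {s : ℝ}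
    (hg : ∀ x ∈ Ici s, HasDerivAt g (g' x) x) (hg' : IntegrableOn g' (Ioi s))
    (htop : Tendsto g atTop (𝓝 0)) :
    ‖g s‖ₑ ≤ ∫⁻ t in Ioi s, ‖g' t‖ₑ := by
  have hFTC : ∫ t in Ioi s, g' t = 0 - g s := integral_Ioi_of_hasDerivAt_of_tendsto' hg hg' htop
  calc ‖g s‖ₑ = ‖∫ t in Ioi s, g' t‖ₑ := by rw [hFTC, zero_sub, enorm_neg]
    _ ≤ ∫⁻ t in Ioi s, ‖g' t‖ₑ := enorm_integral_le_lintegral_enorm _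

theorem lintegral_Ioo_ofReal_mul_rpow_sub_one {α t : ℝ} (hα : 0 < α) (ht : 0 ≤ t) :
    ∫⁻ s in Ioo 0 t, ENNReal.ofReal (α * s ^ (α - 1)) = ENNReal.ofReal (t ^ α) := by
  have hint : IntervalIntegrable (fun s : ℝ => s ^ (α - 1)) volume 0 t :=
    intervalIntegral.intervalIntegrable_rpow' (by linarith)
  rw [← setLIntegral_congr Ioo_ae_eq_Ioc.symm, ← ofReal_integral_eq_lintegral_ofReal,
    integral_const_mul, ← intervalIntegral.integral_of_le ht, integral_rpow (.inl (by linarith)),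
    sub_add_cancel, Real.zero_rpow hα.ne', sub_zero, mul_div_cancel₀ _ hα.ne']
  · exact ((intervalIntegrable_iff_integrableOn_Ioc_of_le ht).1 hint).const_mul α
  · filter_upwards [ae_restrict_mem measurableSet_Ioc] with s hs
    exact mul_nonneg hα.le (Real.rpow_nonneg hs.1.le _)

theorem setLIntegral_Ioi_rpow_mul_setLIntegral_Ioi {φ : ℝ → ℝ≥0∞}
    (hφ : AEMeasurable φ (volume.restrict (Ioi 0))) {α : ℝ} (hα : 0 < α) :
    ∫⁻ s in Ioi 0, ENNReal.ofReal (α * s ^ (α - 1)) * ∫⁻ t in Ioi s, φ t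
      = ∫⁻ t in Ioi 0, ENNReal.ofReal (t ^ α) * φ t := by
  set w : ℝ → ℝ≥0∞ := fun s => ENNReal.ofReal (α * s ^ (α - 1))
  set k : ℝ × ℝ → ℝ≥0∞ := {p | p.1 < p.2}.indicator fun p => w p.1 * φ p.2
  have hw : Measurable w := by fun_prop
  have hk : AEMeasurable k ((volume.restrict (Ioi 0)).prod (volume.restrict (Ioi 0))) :=
    (hw.aemeasurable.comp_fst.mul hφ.comp_snd).indicator
      (measurableSet_lt measurable_fst measurable_snd)
  have hk_fst : ∀ s t, k (s, t) = w s * (Ioi s).indicator φ t := by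
    intro s t; by_cases h : s < t <;> simp [k, h]
  have hk_snd : ∀ s t, k (s, t) = (Iio t).indicator w s * φ t := by
    intro s t; by_cases h : s < t <;> simp [k, h]
  calc ∫⁻ s in Ioi 0, w s * ∫⁻ t in Ioi s, φ t
      = ∫⁻ s in Ioi 0, ∫⁻ t in Ioi 0, k (s, t) := by
        refine setLIntegral_congr_fun measurableSet_Ioi fun s hs => ?_
        simp_rw [hk_fst]
        rw [lintegral_const_mul' _ _ ENNReal.ofReal_ne_top,
          setLIntegral_indicator measurableSet_Ioi, inter_eq_left.2 (Ioi_subset_Ioi hs.le)]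
    _ = ∫⁻ t in Ioi 0, ∫⁻ s in Ioi 0, k (s, t) := lintegral_lintegral_swap hk
    _ = ∫⁻ t in Ioi 0, ENNReal.ofReal (t ^ α) * φ t := by
        refine setLIntegral_congr_fun measurableSet_Ioi fun t ht => ?_
        simp_rw [hk_snd]
        rw [lintegral_mul_const _ (hw.indicator measurableSet_Iio),
          setLIntegral_indicator measurableSet_Iio, inter_comm, Ioi_inter_Iio,
          lintegral_Ioo_ofReal_mul_rpow_sub_one hα ht.le]

theorem weighted_norm_le_weighted_deriv_Ioi {E : Type*} [NormedAddCommGroup E]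
    [NormedSpace ℝ E] [CompleteSpace E] {g g' : ℝ → E}
    (hg : ∀ x ∈ Ioi 0, HasDerivAt g (g' x) x) (hg' : IntegrableOn g' (Ioi 0))
    (htop : Tendsto g atTop (𝓝 0)) {α : ℝ} (hα : 0 < α) :
    ENNReal.ofReal α * ∫⁻ s in Ioi 0, ENNReal.ofReal (s ^ (α - 1)) * ‖g s‖ₑ
      ≤ ∫⁻ s in Ioi 0, ENNReal.ofReal (s ^ α) * ‖g' s‖ₑ := by
  rw [← lintegral_const_mul' _ _ ENNReal.ofReal_ne_top,
    ← setLIntegral_Ioi_rpow_mul_setLIntegral_Ioi hg'.aestronglyMeasurable.enorm hα]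
  refine setLIntegral_mono' measurableSet_Ioi fun s hs => ?_
  rw [← mul_assoc, ← ENNReal.ofReal_mul hα.le]
  gcongr
  exact enorm_le_setLIntegral_Ioi_enorm_of_tendsto_atTop
    (fun x hx => hg x (mem_Ioi.2 (lt_of_lt_of_le hs hx))) (hg'.mono_set (Ioi_subset_Ioi hs.le))
    htop

theorem lintegral_eq_setLIntegral_Ioi_add_comp_neg (f : ℝ → ℝ≥0∞) :
    ∫⁻ x, f x = (∫⁻ x in Ioi 0, f x) + ∫⁻ x in Ioi 0, f (-x) := by
  have hneg : ∫⁻ x in Ioi 0, f (-x) = ∫⁻ x in Iic 0, f x := by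
    rw [setLIntegral_congr Ioi_ae_eq_Ici]
    simpa using (Measure.measurePreserving_neg volume).setLIntegral_comp_preimage_emb
      (MeasurableEquiv.neg ℝ).measurableEmbedding f (Iic 0)
  rw [← lintegral_add_compl f measurableSet_Ioi, compl_Ioi, hneg]

theorem lintegral_ofReal_abs_rpow_mul_abs (β : ℝ) (u : ℝ → ℝ) :
    ∫⁻ s, ENNReal.ofReal (|s| ^ β * |u s|)
      = (∫⁻ s in Ioi 0, ENNReal.ofReal (s ^ β) * ‖u s‖ₑ)
        + ∫⁻ s in Ioi 0, ENNReal.ofReal (s ^ β) * ‖u (-s)‖ₑ := by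
  rw [lintegral_eq_setLIntegral_Ioi_add_comp_neg]
  congr 1 <;> refine setLIntegral_congr_fun measurableSet_Ioi fun s hs => ?_
  · rw [abs_of_pos hs, ENNReal.ofReal_mul (Real.rpow_nonneg hs.le β), Real.enorm_eq_ofReal_abs]
  · rw [abs_neg, abs_of_pos hs, ENNReal.ofReal_mul (Real.rpow_nonneg hs.le β),
      Real.enorm_eq_ofReal_abs]

theorem weighted_norm_le_weighted_deriv
    (g : ℝ → ℝ) (α : ℝ) (hα : 0 < α)
    (hdiff : Differentiable ℝ g)
    (htop : Filter.Tendsto g Filter.atTop (nhds 0))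
    (hbot : Filter.Tendsto g Filter.atBot (nhds 0))
    (hint : Integrable (deriv g)) :
    ENNReal.ofReal α * ∫⁻ s : ℝ, ENNReal.ofReal (|s| ^ (α - 1) * |g s|)
      ≤ ∫⁻ s : ℝ, ENNReal.ofReal (|s| ^ α * |deriv g s|) := by
  have hright := weighted_norm_le_weighted_deriv_Ioi (fun x _ => (hdiff x).hasDerivAt)
    hint.integrableOn htop hα
  have hleft := weighted_norm_le_weighted_deriv_Ioi (g := fun x => g (-x))
    (g' := fun x => -deriv g (-x))
    (fun x _ => by
      simpa [Function.comp_def] using (hdiff (-x)).hasDerivAt.comp x (hasDerivAt_neg x))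
    hint.comp_neg.neg.integrableOn (hbot.comp tendsto_neg_atTop_atBot) hα
  simp only [enorm_neg] at hleft
  rw [lintegral_ofReal_abs_rpow_mul_abs, lintegral_ofReal_abs_rpow_mul_abs, mul_add]
  exact add_le_add hright hleft
end

section
/- Let ζ ∈ ℂ with Re ζ < 0 and ε > 0. Then for every real s, (1/Γ(-ζ)) ∫_{-∞}^0 (-t)^{-ζ-1} e^{εt} e^{2πist} dt = (ε + 2πis)^ζ, where the complex power uses the principal branch. -/
/-!
The substitution `t ↦ -t` turns the integral into the Laplace transform
`∫₀^∞ t^(a-1) e^(-b t) dt` with `a = -ζ` and `b = ε + 2πis`. For real `b > 0` scaling the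
Gamma integral gives `Γ(a) b^(-a)`. Both sides are holomorphic in `b` on the right half-plane
(differentiate under the integral sign, dominating on a ball around `b` by `t^(Re a) e^(-Re b t/2)`),
so the identity theorem extends the formula from the positive reals to all `b` with `Re b > 0`.
-/

open MeasureTheory Set Filter Metric Complex
open scoped Real Topology

section CpowLaplace

variable {p z : ℂ}

lemma norm_cpow_mul_cexp_neg_mul {t : ℝ} (ht : 0 < t) :
    ‖(t : ℂ) ^ p * cexp (-z * t)‖ = t ^ p.re * Real.exp (-z.re * t) := by
  rw [norm_mul, norm_cpow_eq_rpow_re_of_pos ht, norm_exp]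
  simp

lemma aestronglyMeasurable_cpow_mul_cexp_neg_mul (p z : ℂ) :
    AEStronglyMeasurable (fun t : ℝ => (t : ℂ) ^ p * cexp (-z * t)) (volume.restrict (Ioi 0)) :=
  (ContinuousOn.mul
      (fun t ht => (continuousAt_ofReal_cpow_const _ _ (Or.inr (ne_of_gt ht))).continuousWithinAt)
      (by fun_prop)).aestronglyMeasurable measurableSet_Ioi

lemma integrableOn_cpow_mul_cexp_neg_mul (hp : -1 < p.re) (hz : 0 < z.re) :
    IntegrableOn (fun t : ℝ => (t : ℂ) ^ p * cexp (-z * t)) (Ioi 0) := by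
  have hreal := integrableOn_rpow_mul_exp_neg_mul_rpow hp zero_lt_one hz
  simp only [Real.rpow_one] at hreal
  refine hreal.mono' (aestronglyMeasurable_cpow_mul_cexp_neg_mul p z) ?_
  filter_upwards [ae_restrict_mem measurableSet_Ioi] with t ht
  rw [norm_cpow_mul_cexp_neg_mul ht]

lemma hasDerivAt_integral_cpow_mul_cexp_neg_mul (hp : -1 < p.re) (hz : 0 < z.re) :
    HasDerivAt (fun w : ℂ => ∫ t in Ioi (0 : ℝ), (t : ℂ) ^ p * cexp (-w * t))
      (-∫ t in Ioi (0 : ℝ), (t : ℂ) ^ (p + 1) * cexp (-z * t)) z := by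
  have hδ : 0 < z.re / 2 := half_pos hz
  have hball : ∀ w ∈ ball z (z.re / 2), z.re / 2 ≤ w.re := fun w hw => by
    have := (abs_re_le_norm (w - z)).trans_lt (mem_ball_iff_norm.mp hw)
    rw [sub_re] at this
    linarith [(abs_lt.mp this).1]
  rw [← integral_neg]
  refine (hasDerivAt_integral_of_dominated_loc_of_deriv_le (ball_mem_nhds z hδ)
    (F' := fun w t => -((t : ℂ) ^ (p + 1) * cexp (-w * t)))
    (.of_forall fun w => aestronglyMeasurable_cpow_mul_cexp_neg_mul p w)
    (integrableOn_cpow_mul_cexp_neg_mul hp hz)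
    (aestronglyMeasurable_cpow_mul_cexp_neg_mul (p + 1) z).neg ?_
    (integrableOn_rpow_mul_exp_neg_mul_rpow (s := p.re + 1) (by linarith) zero_lt_one hδ) ?_).2
  · filter_upwards [ae_restrict_mem measurableSet_Ioi] with t (ht : 0 < t) w hw
    rw [norm_neg, norm_cpow_mul_cexp_neg_mul ht, Real.rpow_one, add_re, one_re]
    gcongr
    nlinarith [hball w hw]
  · filter_upwards [ae_restrict_mem measurableSet_Ioi] with t (ht : 0 < t) w _
    have hpow : (t : ℂ) ^ (p + 1) = (t : ℂ) ^ p * t := by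
      rw [cpow_add _ _ (ofReal_ne_zero.mpr ht.ne'), cpow_one]
    refine (((hasDerivAt_id w).neg.mul_const (t : ℂ)).cexp.const_mul ((t : ℂ) ^ p)).congr_deriv ?_
    rw [hpow]
    simp only [Pi.neg_apply, id]
    ring

theorem integral_cpow_mul_cexp_neg_mul_Ioi {a : ℂ} (ha : 0 < a.re) (hz : 0 < z.re) :
    ∫ t in Ioi (0 : ℝ), (t : ℂ) ^ (a - 1) * cexp (-z * t) = Gamma a * z ^ (-a) := by
  have ha' : -1 < (a - 1).re := by simpa using ha
  have hopen : IsOpen {w : ℂ | 0 < w.re} := isOpen_lt continuous_const continuous_re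
  have hF : AnalyticOnNhd ℂ (fun w : ℂ => ∫ t in Ioi (0 : ℝ), (t : ℂ) ^ (a - 1) * cexp (-w * t))
      {w | 0 < w.re} := DifferentiableOn.analyticOnNhd (fun w hw =>
    (hasDerivAt_integral_cpow_mul_cexp_neg_mul ha' hw).differentiableAt.differentiableWithinAt) hopen
  have hG : AnalyticOnNhd ℂ (fun w : ℂ => Gamma a * w ^ (-a)) {w | 0 < w.re} :=
    DifferentiableOn.analyticOnNhd (fun w hw => ((differentiableAt_id.cpow
      (differentiableAt_const _) (Or.inl hw)).const_mul _).differentiableWithinAt) hopen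
  have hreal : ∀ r : ℝ, 0 < r →
      ∫ t in Ioi (0 : ℝ), (t : ℂ) ^ (a - 1) * cexp (-r * t) = Gamma a * (r : ℂ) ^ (-a) := by
    intro r hr
    have harg : (r : ℂ).arg ≠ π := by
      rw [arg_ofReal_of_nonneg hr.le]
      exact Real.pi_ne_zero.symm
    simp_rw [neg_mul]
    rw [integral_cpow_mul_exp_neg_mul_Ioi ha hr, one_div, inv_cpow _ _ harg, cpow_neg, mul_comm]
  have hofReal : Tendsto ((↑) : ℝ → ℂ) (𝓝[≠] 1) (𝓝[≠] 1) :=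
    tendsto_nhdsWithin_iff.mpr ⟨tendsto_nhdsWithin_of_tendsto_nhds continuous_ofReal.continuousAt,
      eventually_nhdsWithin_iff.mpr (.of_forall fun t ht => ofReal_ne_one.mpr ht)⟩
  refine hF.eqOn_of_preconnected_of_frequently_eq hG (convex_halfSpace_re_gt 0).isPreconnected
    (z₀ := 1) (by simp) (hofReal.frequently ?_) hz
  exact ((eventually_gt_nhds one_pos).filter_mono nhdsWithin_le_nhds).mono hreal |>.frequently

end CpowLaplace

theorem integral_Iio_comp_neg {E : Type*} [NormedAddCommGroup E] [NormedSpace ℝ E]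
    (c : ℝ) (f : ℝ → E) : ∫ x in Iio c, f (-x) = ∫ x in Ioi (-c), f x := by
  rw [setIntegral_congr_set Iio_ae_eq_Iic, integral_comp_neg_Iic]

theorem gamma_fourier_identity (ζ : ℂ) (hζ : ζ.re < 0) (ε : ℝ) (hε : 0 < ε) (s : ℝ) :
    (1 / Complex.Gamma (-ζ)) *
        ∫ t in Set.Iio (0:ℝ),
          (-(t : ℂ)) ^ (-ζ - 1) * Complex.exp ((ε : ℂ) * t) *
            Complex.exp (2 * (π : ℂ) * Complex.I * s * t)
      = ((ε : ℂ) + 2 * (π : ℂ) * Complex.I * s) ^ ζ := by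
  set b : ℂ := ε + 2 * π * I * s
  have hb : 0 < b.re := by simpa [b] using hε
  have hintegrand : ∀ t : ℝ, (-(t : ℂ)) ^ (-ζ - 1) * cexp (ε * t) * cexp (2 * π * I * s * t)
      = ((-t : ℝ) : ℂ) ^ (-ζ - 1) * cexp (-b * ((-t : ℝ) : ℂ)) := fun t => by
    rw [mul_assoc, ← exp_add]
    push_cast
    simp only [b]
    ring_nf
  have ha : 0 < (-ζ).re := by simpa using hζ
  simp only [hintegrand]
  rw [integral_Iio_comp_neg 0 fun u : ℝ => (u : ℂ) ^ (-ζ - 1) * cexp (-b * u), neg_zero,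
    integral_cpow_mul_cexp_neg_mul_Ioi ha hb, neg_neg, one_div,
    inv_mul_cancel_left₀ (Gamma_ne_zero_of_re_pos ha)]
end

section
/- Let f be holomorphic on the open strip S = {z : 0 < Re z < 1}, continuous on its closure, with |f(z)| ≤ κ e^{κ|Im z|} on S for some κ > 0. Assume |f(iτ)| ≤ e^{a₀|τ|+b₀} and |f(1+iτ)| ≤ e^{a₁|τ|+b₁} for all real τ, where a₀, a₁ ≥ 0. Then for every θ ∈ (0,1): |f(θ)| ≤ exp( √(θ(1-θ)) · √((1-θ)a₀² + θa₁²) + (1-θ)b₀ + θb₁ ). -/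
/-!
Multiplying `f` by the Gaussian weight `exp (c z²)`, `c > 0`, makes it bounded on the strip and
turns the boundary bounds `exp (aⱼ |τ| + bⱼ)` into constants, because `a |τ| - c τ² ≤ a² / 4c`.
Hadamard's three-lines theorem for the weighted function then gives
`‖f θ‖ ≤ exp (c θ (1 - θ) + ((1 - θ) a₀² + θ a₁²) / 4c + (1 - θ) b₀ + θ b₁)`,
and minimizing over `c` produces the square-root term.
-/

open Complex Complex.HadamardThreeLines Set Real

lemma mul_abs_sub_mul_sq_le (a : ℝ) {c : ℝ} (hc : 0 < c) (y : ℝ) :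
    a * |y| - c * y ^ 2 ≤ a ^ 2 / (4 * c) := by
  rw [le_div_iff₀ (by positivity), ← sq_abs y]
  nlinarith [sq_nonneg (2 * c * |y| - a)]

lemma le_exp_mul_add_of_forall_le_exp {s t B y : ℝ} (hs : 0 < s) (ht : 0 ≤ t)
    (h : ∀ c > 0, y ≤ rexp (c * s ^ 2 + t ^ 2 / (4 * c) + B)) : y ≤ rexp (s * t + B) := by
  rcases le_or_gt y 0 with hy | hy
  · exact hy.trans (exp_pos _).le
  rw [← log_le_iff_le_exp hy]
  refine le_of_forall_pos_le_add fun ε hε => ?_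
  -- `t / 2s` minimizes `c s² + t² / 4c`; the shift keeps `c` positive when `t = 0`.
  set c := t / (2 * s) + ε / s ^ 2
  have hc : 0 < c := by positivity
  have hcs : c * s ^ 2 = s * t / 2 + ε := by simp only [c]; field_simp
  have hquot : t ^ 2 / (4 * c) ≤ s * t / 2 := by
    rw [div_le_iff₀ (by positivity)]
    have : 2 * c * s = t + 2 * ε / s := by simp only [c]; field_simp
    nlinarith [mul_nonneg ht (div_pos hε hs).le]
  calc Real.log y ≤ c * s ^ 2 + t ^ 2 / (4 * c) + B := (log_le_iff_le_exp hy).2 (h c hc)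
    _ ≤ s * t + B + ε := by linarith

lemma norm_mul_cexp_mul_sq_le {w z : ℂ} {a b c : ℝ} (hc : 0 < c)
    (hw : ‖w‖ ≤ rexp (a * |z.im| + b)) :
    ‖w * cexp (c * z ^ 2)‖ ≤ rexp (b + c * z.re ^ 2 + a ^ 2 / (4 * c)) := by
  have hre : (c * z ^ 2 : ℂ).re = c * (z.re ^ 2 - z.im ^ 2) := by simp [sq]
  calc ‖w * cexp (c * z ^ 2)‖ ≤ rexp (a * |z.im| + b) * rexp (c * (z.re ^ 2 - z.im ^ 2)) := by
        rw [norm_mul, norm_exp, hre]; gcongr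
    _ = rexp (a * |z.im| - c * z.im ^ 2 + (b + c * z.re ^ 2)) := by rw [← Real.exp_add]; ring_nf
    _ ≤ rexp (b + c * z.re ^ 2 + a ^ 2 / (4 * c)) :=
        Real.exp_le_exp.2 (by linarith [mul_abs_sub_mul_sq_le a hc z.im])

lemma norm_le_exp_interp_of_bounded {E : Type*} [NormedAddCommGroup E] [NormedSpace ℂ E]
    {g : ℂ → E} {m₀ m₁ C : ℝ} (hd : DiffContOnCl ℂ g (verticalStrip 0 1))
    (hC : ∀ z ∈ verticalStrip 0 1, ‖g z‖ ≤ C)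
    (h₀ : ∀ z ∈ re ⁻¹' {0}, ‖g z‖ ≤ rexp m₀) (h₁ : ∀ z ∈ re ⁻¹' {1}, ‖g z‖ ≤ rexp m₁)
    {z : ℂ} (hz : z ∈ verticalClosedStrip 0 1) :
    ‖g z‖ ≤ rexp ((1 - z.re) * m₀ + z.re * m₁) := by
  have hbdd : BddAbove ((norm ∘ g) '' verticalClosedStrip 0 1) := by
    refine ⟨max C (max (rexp m₀) (rexp m₁)), ?_⟩
    rintro _ ⟨w, ⟨hw₀, hw₁⟩, rfl⟩
    rcases hw₀.eq_or_lt with hw₀ | hw₀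
    · exact (h₀ w hw₀.symm).trans (by simp)
    rcases hw₁.eq_or_lt with hw₁ | hw₁
    · exact (h₁ w hw₁).trans (by simp)
    exact (hC w ⟨hw₀, hw₁⟩).trans (le_max_left _ _)
  calc ‖g z‖ ≤ rexp m₀ ^ (1 - z.re) * rexp m₁ ^ z.re :=
        norm_le_interp_of_mem_verticalClosedStrip₀₁' g hz hd hbdd h₀ h₁
    _ = rexp ((1 - z.re) * m₀ + z.re * m₁) := by
        rw [← exp_mul, ← exp_mul, ← Real.exp_add]; ring_nf

lemma norm_ofReal_le_exp_of_strip_growth {f : ℂ → ℂ} {κ a₀ a₁ b₀ b₁ : ℝ} (hκ : 0 < κ)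
    (hdiff : DifferentiableOn ℂ f {z : ℂ | 0 < z.re ∧ z.re < 1})
    (hcont : ContinuousOn f {z : ℂ | 0 ≤ z.re ∧ z.re ≤ 1})
    (hgrowth : ∀ z : ℂ, 0 < z.re → z.re < 1 → ‖f z‖ ≤ κ * rexp (κ * |z.im|))
    (h0 : ∀ τ : ℝ, ‖f (Complex.I * (τ : ℂ))‖ ≤ rexp (a₀ * |τ| + b₀))
    (h1 : ∀ τ : ℝ, ‖f (1 + Complex.I * (τ : ℂ))‖ ≤ rexp (a₁ * |τ| + b₁))
    {c : ℝ} (hc : 0 < c) {θ : ℝ} (hθ : θ ∈ Icc 0 1) :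
    ‖f θ‖ ≤ rexp (c * (θ * (1 - θ)) + ((1 - θ) * a₀ ^ 2 + θ * a₁ ^ 2) / (4 * c)
      + ((1 - θ) * b₀ + θ * b₁)) := by
  set g : ℂ → ℂ := fun z ↦ f z * cexp (c * z ^ 2)
  have hd : DiffContOnCl ℂ g (verticalStrip 0 1) := by
    refine ⟨hdiff.mul (by fun_prop), ?_⟩
    rw [verticalStrip, closure_preimage_re, closure_Ioo zero_ne_one]
    exact hcont.mul (by fun_prop)
  have hC : ∀ z ∈ verticalStrip 0 1, ‖g z‖ ≤ rexp (Real.log κ + c + κ ^ 2 / (4 * c)) := by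
    rintro z ⟨hz₀, hz₁⟩
    have hf : ‖f z‖ ≤ rexp (κ * |z.im| + Real.log κ) := by
      rw [Real.exp_add, Real.exp_log hκ, mul_comm]
      exact hgrowth z hz₀ hz₁
    refine (norm_mul_cexp_mul_sq_le hc hf).trans (Real.exp_le_exp.2 ?_)
    have : z.re ^ 2 ≤ 1 := by nlinarith
    nlinarith
  have h₀ : ∀ z ∈ re ⁻¹' {0}, ‖g z‖ ≤ rexp (b₀ + a₀ ^ 2 / (4 * c)) := by
    intro z (hz : z.re = 0)
    have hf : ‖f z‖ ≤ rexp (a₀ * |z.im| + b₀) := by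
      convert h0 z.im
      apply Complex.ext <;> simp [hz]
    exact (norm_mul_cexp_mul_sq_le hc hf).trans_eq (by simp [hz])
  have h₁ : ∀ z ∈ re ⁻¹' {1}, ‖g z‖ ≤ rexp (b₁ + c + a₁ ^ 2 / (4 * c)) := by
    intro z (hz : z.re = 1)
    have hf : ‖f z‖ ≤ rexp (a₁ * |z.im| + b₁) := by
      convert h1 z.im
      apply Complex.ext <;> simp [hz]
    exact (norm_mul_cexp_mul_sq_le hc hf).trans_eq (by simp [hz])
  have hg := norm_le_exp_interp_of_bounded hd hC h₀ h₁ (z := θ) (by simpa [verticalClosedStrip])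
  have hgθ : ‖g θ‖ = ‖f θ‖ * rexp (c * θ ^ 2) := by
    simp [g, norm_exp, ← ofReal_pow, ← ofReal_mul]
  rw [hgθ, ← le_div_iff₀ (Real.exp_pos _), ← Real.exp_sub, ofReal_re] at hg
  refine hg.trans_eq (congrArg rexp ?_)
  field_simp
  ring

theorem three_lines_exponential_growth_general
    (f : ℂ → ℂ) (κ a₀ a₁ b₀ b₁ : ℝ) (hκ : 0 < κ)
    (hdiff : DifferentiableOn ℂ f {z : ℂ | 0 < z.re ∧ z.re < 1})
    (hcont : ContinuousOn f {z : ℂ | 0 ≤ z.re ∧ z.re ≤ 1})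
    (hgrowth : ∀ z : ℂ, 0 < z.re → z.re < 1 →
      ‖f z‖ ≤ κ * Real.exp (κ * |z.im|))
    (h0 : ∀ τ : ℝ, ‖f (Complex.I * (τ : ℂ))‖ ≤ Real.exp (a₀ * |τ| + b₀))
    (h1 : ∀ τ : ℝ, ‖f (1 + Complex.I * (τ : ℂ))‖ ≤ Real.exp (a₁ * |τ| + b₁)) :
    ∀ θ : ℝ, θ ∈ Set.Ioo (0:ℝ) 1 →
      ‖f (θ : ℂ)‖ ≤
        Real.exp (Real.sqrt (θ * (1 - θ)) * Real.sqrt ((1 - θ) * a₀ ^ 2 + θ * a₁ ^ 2)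
          + (1 - θ) * b₀ + θ * b₁) := by
  rintro θ ⟨hθ₀, hθ₁⟩
  have hP : 0 < θ * (1 - θ) := by nlinarith
  have hQ : 0 ≤ (1 - θ) * a₀ ^ 2 + θ * a₁ ^ 2 := by nlinarith [sq_nonneg a₀, sq_nonneg a₁]
  rw [add_assoc]
  refine le_exp_mul_add_of_forall_le_exp (Real.sqrt_pos.2 hP) (Real.sqrt_nonneg _) fun c hc ↦ ?_
  rw [Real.sq_sqrt hP.le, Real.sq_sqrt hQ]
  exact norm_ofReal_le_exp_of_strip_growth hκ hdiff hcont hgrowth h0 h1 hc ⟨hθ₀.le, hθ₁.le⟩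

theorem three_lines_exponential_growth
    (f : ℂ → ℂ) (κ a₀ a₁ b₀ b₁ : ℝ) (hκ : 0 < κ)
    (ha₀ : 0 ≤ a₀) (ha₁ : 0 ≤ a₁)
    (hdiff : DifferentiableOn ℂ f {z : ℂ | 0 < z.re ∧ z.re < 1})
    (hcont : ContinuousOn f {z : ℂ | 0 ≤ z.re ∧ z.re ≤ 1})
    (hgrowth : ∀ z : ℂ, 0 < z.re → z.re < 1 →
      ‖f z‖ ≤ κ * Real.exp (κ * |z.im|))
    (h0 : ∀ τ : ℝ, ‖f (Complex.I * (τ : ℂ))‖ ≤ Real.exp (a₀ * |τ| + b₀))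
    (h1 : ∀ τ : ℝ, ‖f (1 + Complex.I * (τ : ℂ))‖ ≤ Real.exp (a₁ * |τ| + b₁)) :
    ∀ θ : ℝ, θ ∈ Set.Ioo (0:ℝ) 1 →
      ‖f (θ : ℂ)‖ ≤
        Real.exp (Real.sqrt (θ * (1 - θ)) * Real.sqrt ((1 - θ) * a₀ ^ 2 + θ * a₁ ^ 2)
          + (1 - θ) * b₀ + θ * b₁) :=
  three_lines_exponential_growth_general f κ a₀ a₁ b₀ b₁ hκ hdiff hcont hgrowth h0 h1
end

section
/- For 0 ≤ u ≤ 1/4, every n ≥ 1, every integer M with 0 ≤ M ≤ n, and every ξ ∈ ℝⁿ: |(∏_{j=1}^n sin(πξ_j)/(πξ_j)) · Σ_{S ⊆ {1,…,n}, |S| ≥ M} ∏_{j∉S} η̂(uξ_j) ∏_{j∈S} (1 - η̂(uξ_j))| ≤ u^M, where η̂(t) = (sin(πt)/(πt))². -/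
/-! With `b j = (1 - sinc (u ξ j) ^ 2) / u`, each term of the sum is at most
`∏ j ∈ S, (1 - sinc (u ξ j) ^ 2) = u ^ #S * ∏ j ∈ S, b j ≤ u ^ M * ∏ j ∈ S, b j`, and summing
`∏ j ∈ S, b j` over all `S` gives `∏ j, (1 + b j)`. So it suffices that
`|sinc t| * (1 + (1 - sinc (u t) ^ 2) / u) ≤ 1` for every `t`. For `|t| ≤ 1` this follows from
`|sinc t| ≤ 1 - t ^ 2` (Euler's product for the sine) and `1 - sinc (u t) ^ 2 ≤ 4 u² t² ≤ u t²`;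
for `|t| > 1` from `|sinc t| ≤ 1 / (π |t|)` and `1 - sinc (u t) ^ 2 ≤ 2 u |t|`. -/

open scoped Real

/-- The normalized sinc function `sin(πt)/(πt)`, extended by `1` at `t = 0`. -/
noncomputable def sinc (t : ℝ) : ℝ := if t = 0 then 1 else Real.sin (π * t) / (π * t)

open Filter Finset

lemma sinc_eq_real_sinc (t : ℝ) : sinc t = Real.sinc (π * t) := by
  simp [sinc, Real.sinc, Real.pi_ne_zero]

lemma sinc_zero : sinc 0 = 1 := by
  simp [sinc]

lemma sinc_abs (t : ℝ) : sinc |t| = sinc t := by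
  rcases abs_choice t with h | h <;> simp [h, sinc_eq_real_sinc]

lemma abs_sinc_le_one (t : ℝ) : |sinc t| ≤ 1 := by
  simpa [sinc_eq_real_sinc] using Real.abs_sinc_le_one (π * t)

lemma sinc_sq_le_one (t : ℝ) : sinc t ^ 2 ≤ 1 := by
  rw [← sq_abs]
  exact pow_le_one₀ (abs_nonneg _) (abs_sinc_le_one t)

lemma abs_sinc_le_inv {t : ℝ} (ht : t ≠ 0) : |sinc t| ≤ (π * |t|)⁻¹ := by
  rw [sinc, if_neg ht, abs_div, abs_mul, abs_of_pos Real.pi_pos, div_eq_mul_inv]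
  exact mul_le_of_le_one_left (by positivity) (Real.abs_sin_le_one _)

/-- Every factor of Euler's product `sin (π t) = π t ∏ₖ (1 - t² / k²)` lies in `[0, 1]`
when `0 ≤ t ≤ 1`, so the product is at most its first factor. -/
lemma sin_pi_mul_le {t : ℝ} (h0 : 0 ≤ t) (h1 : t ≤ 1) :
    Real.sin (π * t) ≤ π * t * (1 - t ^ 2) := by
  have hlim := (Real.tendsto_euler_sin_prod t).comp (tendsto_add_atTop_nat 1)
  refine le_of_tendsto' hlim fun n => ?_
  simp only [Function.comp_apply, prod_range_succ', Nat.cast_zero, zero_add, one_pow, div_one]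
  have ht2 : t ^ 2 ≤ 1 := pow_le_one₀ h0 h1
  have htail : ∏ k ∈ range n, (1 - t ^ 2 / ((k + 1 : ℕ) + 1 : ℝ) ^ 2) ≤ 1 := by
    refine prod_le_one (fun k _ => ?_) (fun k _ => ?_)
    · rw [sub_nonneg, div_le_one (by positivity)]
      exact ht2.trans (one_le_pow₀ (by linarith [k.cast_nonneg (α := ℝ)]))
    · linarith [show 0 ≤ t ^ 2 / ((k + 1 : ℕ) + 1 : ℝ) ^ 2 by positivity]
  have : 0 ≤ π * t * (1 - t ^ 2) := mul_nonneg (by positivity) (by linarith)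
  nlinarith

lemma abs_sinc_le_one_sub_sq {t : ℝ} (ht : |t| ≤ 1) : |sinc t| ≤ 1 - t ^ 2 := by
  rw [← sinc_abs, ← sq_abs t]
  obtain h | h := (abs_nonneg t).eq_or_lt
  · simp [← h, sinc_zero]
  have hsin : 0 ≤ Real.sin (π * |t|) :=
    Real.sin_nonneg_of_nonneg_of_le_pi (by positivity) (by nlinarith [Real.pi_pos])
  rw [sinc, if_neg h.ne', abs_of_nonneg (by positivity), div_le_iff₀ (by positivity)]
  linarith [sin_pi_mul_le h.le ht]

lemma one_sub_real_sinc_le (x : ℝ) : 1 - Real.sinc x ≤ x ^ 2 / 6 := by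
  wlog hx : 0 < x generalizing x
  · obtain h | h := (not_lt.1 hx).eq_or_lt
    · simp [h]
    simpa using this (-x) (neg_pos.2 h)
  rw [Real.sinc_of_ne_zero hx.ne', sub_le_iff_le_add, ← sub_le_iff_le_add', le_div_iff₀ hx]
  nlinarith [Real.sin_ge_sub_cube hx.le]

lemma one_sub_sinc_sq_le (s : ℝ) : 1 - sinc s ^ 2 ≤ 4 * s ^ 2 := by
  have hlow := one_sub_real_sinc_le (π * s)
  rw [← sinc_eq_real_sinc] at hlow
  have hsinc := abs_le.1 (abs_sinc_le_one s)
  have hπ : π ^ 2 ≤ 12 := by nlinarith [Real.pi_lt_d2, Real.pi_pos]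
  -- `1 - sinc² = (1 - sinc) (1 + sinc) ≤ 2 (1 - sinc) ≤ π² s² / 3`
  nlinarith [sq_nonneg s]

lemma one_sub_sinc_sq_le_two_mul_abs (s : ℝ) : 1 - sinc s ^ 2 ≤ 2 * |s| := by
  rcases le_total (2 * |s|) 1 with h | h
  · nlinarith [one_sub_sinc_sq_le s, sq_abs s, abs_nonneg s]
  · nlinarith [sq_nonneg (sinc s)]

lemma abs_sinc_mul_one_add_le_one {u : ℝ} (hu0 : 0 < u) (hu1 : u ≤ 1 / 4) (t : ℝ) :
    |sinc t| * (1 + (1 - sinc (u * t) ^ 2) / u) ≤ 1 := by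
  have hfac0 : 0 ≤ 1 + (1 - sinc (u * t) ^ 2) / u := by
    have := sub_nonneg.2 (sinc_sq_le_one (u * t))
    positivity
  rcases le_or_gt |t| 1 with ht | ht
  · have hfac : (1 - sinc (u * t) ^ 2) / u ≤ t ^ 2 := by
      rw [div_le_iff₀ hu0]
      nlinarith [one_sub_sinc_sq_le (u * t), sq_nonneg t]
    calc |sinc t| * (1 + (1 - sinc (u * t) ^ 2) / u)
        ≤ (1 - t ^ 2) * (1 + t ^ 2) :=
          mul_le_mul (abs_sinc_le_one_sub_sq ht) (by linarith) hfac0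
            ((abs_nonneg _).trans (abs_sinc_le_one_sub_sq ht))
      _ ≤ 1 := by nlinarith [sq_nonneg t]
  · have hfac : (1 - sinc (u * t) ^ 2) / u ≤ 2 * |t| := by
      have := one_sub_sinc_sq_le_two_mul_abs (u * t)
      rw [abs_mul, abs_of_pos hu0] at this
      rw [div_le_iff₀ hu0]
      linarith
    have ht0 : t ≠ 0 := abs_pos.1 (zero_lt_one.trans ht)
    calc |sinc t| * (1 + (1 - sinc (u * t) ^ 2) / u)
        ≤ (π * |t|)⁻¹ * (π * |t|) :=
          mul_le_mul (abs_sinc_le_inv ht0) (by nlinarith [Real.pi_gt_three]) hfac0 (by positivity)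
      _ = 1 := inv_mul_cancel₀ (by positivity)

lemma Finset.sum_prod_le_prod_one_add {ι R : Type*} [Fintype ι] [CommSemiring R] [PartialOrder R]
    [IsOrderedRing R] (F : Finset (Finset ι)) {b : ι → R} (hb : ∀ i, 0 ≤ b i) :
    ∑ S ∈ F, ∏ i ∈ S, b i ≤ ∏ i, (1 + b i) := by
  rw [prod_one_add]
  exact sum_le_sum_of_subset_of_nonneg (fun S _ => mem_powerset.2 (subset_univ S))
    fun S _ _ => prod_nonneg fun i _ => hb i

lemma Finset.sum_filter_le_card_zero_pow {ι R : Type*} [Fintype ι] [CommSemiring R] (M : ℕ) :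
    ∑ S : Finset ι with M ≤ #S, (0 : R) ^ #S = 0 ^ M := by
  rcases M with _ | M
  · simpa using (prod_one_add (f := fun _ : ι => (0 : R)) univ).symm
  · exact (sum_eq_zero fun S hS => zero_pow (by grind)).trans (zero_pow M.succ_ne_zero).symm

lemma prod_compl_mul_prod_one_sub_le {ι : Type*} [Fintype ι] [DecidableEq ι] {x : ι → ℝ}
    (hx0 : ∀ i, 0 ≤ x i) (hx1 : ∀ i, x i ≤ 1) {u : ℝ} (hu0 : 0 < u) (hu1 : u ≤ 1) {M : ℕ}
    {S : Finset ι} (hS : M ≤ #S) :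
    (∏ i ∈ Sᶜ, x i) * ∏ i ∈ S, (1 - x i) ≤ u ^ M * ∏ i ∈ S, (1 - x i) / u := by
  have hprod : 0 ≤ ∏ i ∈ S, (1 - x i) := prod_nonneg fun i _ => sub_nonneg.2 (hx1 i)
  calc (∏ i ∈ Sᶜ, x i) * ∏ i ∈ S, (1 - x i)
      ≤ ∏ i ∈ S, (1 - x i) :=
        mul_le_of_le_one_left hprod (prod_le_one (fun i _ => hx0 i) fun i _ => hx1 i)
    _ = u ^ #S * ∏ i ∈ S, (1 - x i) / u := by
        rw [prod_div_distrib, prod_const, mul_div_cancel₀ _ (pow_ne_zero _ hu0.ne')]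
    _ ≤ u ^ M * ∏ i ∈ S, (1 - x i) / u := by
        refine mul_le_mul_of_nonneg_right (pow_le_pow_of_le_one hu0.le hu1 hS) ?_
        exact prod_nonneg fun i _ => div_nonneg (sub_nonneg.2 (hx1 i)) hu0.le

theorem cube_multiplier_bound_general (n M : ℕ)
    (u : ℝ) (hu : u ∈ Set.Icc (0:ℝ) (1/4)) (ξ : Fin n → ℝ) :
    |(∏ j, sinc (ξ j)) *
        ∑ S ∈ Finset.univ.powerset.filter (fun S : Finset (Fin n) => M ≤ S.card),
          (∏ j ∈ Sᶜ, sinc (u * ξ j) ^ 2) * ∏ j ∈ S, (1 - sinc (u * ξ j) ^ 2)|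
      ≤ u ^ M := by
  obtain ⟨hu0, hu1⟩ := hu
  obtain rfl | hu := hu0.eq_or_lt
  · simp only [powerset_univ, zero_mul, sinc_zero, one_pow, prod_const_one, sub_self, prod_const,
      one_mul, abs_mul]
    rw [sum_filter_le_card_zero_pow, abs_pow, abs_zero]
    exact mul_le_of_le_one_left (pow_nonneg le_rfl M) <| (abs_prod _ _).trans_le <|
      prod_le_one (fun _ _ => abs_nonneg _) fun j _ => abs_sinc_le_one _
  set b : Fin n → ℝ := fun j => (1 - sinc (u * ξ j) ^ 2) / u
  have hb : ∀ j, 0 ≤ b j := fun j => div_nonneg (sub_nonneg.2 (sinc_sq_le_one _)) hu.le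
  rw [abs_mul, abs_prod, abs_of_nonneg (sum_nonneg fun S _ => mul_nonneg
    (prod_nonneg fun j _ => sq_nonneg _) (prod_nonneg fun j _ => sub_nonneg.2 (sinc_sq_le_one _)))]
  calc _ ≤ (∏ j, |sinc (ξ j)|) * ∑ S ∈ univ.powerset.filter (fun S : Finset (Fin n) => M ≤ #S),
          u ^ M * ∏ j ∈ S, b j := by
        refine mul_le_mul_of_nonneg_left (sum_le_sum fun S hS => ?_) (by positivity)
        exact prod_compl_mul_prod_one_sub_le (fun j => sq_nonneg _) (fun j => sinc_sq_le_one _) hu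
          (by linarith) (mem_filter.1 hS).2
    _ ≤ u ^ M * ∏ j, |sinc (ξ j)| * (1 + b j) := by
        rw [← mul_sum, mul_left_comm, prod_mul_distrib]
        gcongr
        exact sum_prod_le_prod_one_add _ hb
    _ ≤ u ^ M := mul_le_of_le_one_right (by positivity)
        (prod_le_one (fun j _ => mul_nonneg (abs_nonneg _) (by linarith [hb j]))
          fun j _ => abs_sinc_mul_one_add_le_one hu hu1 (ξ j))

theorem cube_multiplier_bound (n M : ℕ) (hn : 1 ≤ n) (hM : M ≤ n)
    (u : ℝ) (hu : u ∈ Set.Icc (0:ℝ) (1/4)) (ξ : Fin n → ℝ) :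
    |(∏ j, sinc (ξ j)) *
        ∑ S ∈ Finset.univ.powerset.filter (fun S : Finset (Fin n) => M ≤ S.card),
          (∏ j ∈ Sᶜ, sinc (u * ξ j) ^ 2) * ∏ j ∈ S, (1 - sinc (u * ξ j) ^ 2)|
      ≤ u ^ M :=
  cube_multiplier_bound_general n M u hu ξ
end

section
/- For all r ∈ ℝ, all ℓ ≥ 1, and all ξ = (ξ₁,…,ξ_ℓ) ∈ ℝ^ℓ: (1 - e^{-r²|ξ|²}) · ∏_{j=1}^ℓ (sin(πξ_j)/(πξ_j))² ≤ r². -/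
/-!
Since `1 - e^{-x} ≤ x`, it suffices to show `|ξ|² · ∏ sinc(ξ_j)² ≤ 1`. The elementary bound
`sinc(t)² ≤ 1/(1+t²)` reduces this to `|ξ|² ≤ ∏ (1 + ξ_j²)`, which holds because expanding the
product gives `1 + |ξ|²` plus nonnegative terms. For the bound on `sinc`, write
`sin y = 2 sin(y/2) cos(y/2)` and use `|sin x| ≤ |x|` together with `cos x ≤ 1/√(1+x²)` on
`|x| ≤ π/2`; this gives `sin² y · (1 + y²/4) ≤ y²` for `|y| ≤ π`, and `π² ≥ 4` does the rest.
For `|t| > 1` the trivial bound `sin² ≤ 1` suffices.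
-/

open scoped Real

namespace Real

theorem cos_sq_mul_one_add_sq_le_one {x : ℝ} (hx : |x| ≤ π / 2) :
    cos x ^ 2 * (1 + x ^ 2) ≤ 1 := by
  obtain ⟨hx₁, hx₂⟩ := abs_le.1 hx
  have hcos : cos x ≤ 1 / √(x ^ 2 + 1) :=
    cos_le_one_div_sqrt_sq_add_one (by linarith [pi_pos]) (by linarith [pi_pos])
  have hpos : 0 < x ^ 2 + 1 := by positivity
  have hsq : cos x ^ 2 ≤ 1 / (x ^ 2 + 1) := by
    calc cos x ^ 2 ≤ (1 / √(x ^ 2 + 1)) ^ 2 :=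
          pow_le_pow_left₀ (cos_nonneg_of_mem_Icc ⟨hx₁, hx₂⟩) hcos 2
      _ = 1 / (x ^ 2 + 1) := by rw [div_pow, one_pow, sq_sqrt hpos.le]
  rw [le_div_iff₀ hpos] at hsq
  linarith

theorem sin_sq_mul_one_add_half_sq_le {y : ℝ} (hy : |y| ≤ π) :
    sin y ^ 2 * (1 + (y / 2) ^ 2) ≤ y ^ 2 := by
  have hcos : cos (y / 2) ^ 2 * (1 + (y / 2) ^ 2) ≤ 1 :=
    cos_sq_mul_one_add_sq_le_one (by rw [abs_div, abs_two]; linarith)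
  have hsin : sin (y / 2) ^ 2 ≤ (y / 2) ^ 2 := sin_sq_le_sq
  calc sin y ^ 2 * (1 + (y / 2) ^ 2)
      = 4 * sin (y / 2) ^ 2 * (cos (y / 2) ^ 2 * (1 + (y / 2) ^ 2)) := by
        rw [show y = 2 * (y / 2) by ring, sin_two_mul]
        ring_nf
    _ ≤ 4 * (y / 2) ^ 2 * 1 := by gcongr
    _ = y ^ 2 := by ring

end Real

theorem sinc_sq_le_inv_one_add_sq (t : ℝ) : sinc t ^ 2 ≤ (1 + t ^ 2)⁻¹ := by
  rw [sinc]
  split_ifs with ht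
  · simp [ht]
  have hπ : 4 ≤ π ^ 2 := by nlinarith [Real.pi_gt_three]
  rw [div_pow, ← one_div, div_le_div_iff₀ (by positivity) (by positivity), one_mul]
  rcases le_or_gt (t ^ 2) 1 with ht₁ | ht₁
  · have hy : |π * t| ≤ π := by
      rw [abs_mul, abs_of_pos Real.pi_pos]
      exact mul_le_of_le_one_right Real.pi_pos.le (abs_le_one_iff_mul_self_le_one.2 (by nlinarith))
    calc Real.sin (π * t) ^ 2 * (1 + t ^ 2) ≤ Real.sin (π * t) ^ 2 * (1 + (π * t / 2) ^ 2) := by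
          gcongr ?_ * (1 + ?_)
          rw [div_pow, mul_pow]
          nlinarith [sq_nonneg t]
      _ ≤ (π * t) ^ 2 := Real.sin_sq_mul_one_add_half_sq_le hy
  · calc Real.sin (π * t) ^ 2 * (1 + t ^ 2) ≤ 1 * (t ^ 2 + t ^ 2) :=
          mul_le_mul (Real.sin_sq_le_one _) (by linarith) (by positivity) zero_le_one
      _ ≤ (π * t) ^ 2 := by nlinarith

theorem Finset.one_add_sum_le_prod_one_add {ι R : Type*} [CommSemiring R] [PartialOrder R]
    [IsOrderedRing R] (s : Finset ι) {f : ι → R} (hf : ∀ i ∈ s, 0 ≤ f i) :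
    1 + ∑ i ∈ s, f i ≤ ∏ i ∈ s, (1 + f i) := by
  classical
  induction s using Finset.induction_on with
  | empty => simp
  | insert a s ha ih =>
    rw [Finset.sum_insert ha, Finset.prod_insert ha]
    have hs : ∀ i ∈ s, 0 ≤ f i := fun i hi => hf i (Finset.mem_insert_of_mem hi)
    have hfa : 0 ≤ f a := hf a (Finset.mem_insert_self a s)
    calc 1 + (f a + ∑ i ∈ s, f i)
        ≤ 1 + (f a + ∑ i ∈ s, f i) + f a * ∑ i ∈ s, f i :=
          le_add_of_nonneg_right (mul_nonneg hfa (Finset.sum_nonneg hs))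
      _ = (1 + f a) * (1 + ∑ i ∈ s, f i) := by ring
      _ ≤ (1 + f a) * ∏ i ∈ s, (1 + f i) :=
          mul_le_mul_of_nonneg_left (ih hs) (add_nonneg zero_le_one hfa)

theorem sum_sq_mul_prod_sinc_sq_le_one {ι : Type*} [Fintype ι] (ξ : ι → ℝ) :
    (∑ j, ξ j ^ 2) * ∏ j, sinc (ξ j) ^ 2 ≤ 1 := by
  have hprod : 0 < ∏ j, (1 + ξ j ^ 2) := Finset.prod_pos fun j _ => by positivity
  have hsum : 1 + ∑ j, ξ j ^ 2 ≤ ∏ j, (1 + ξ j ^ 2) :=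
    Finset.univ.one_add_sum_le_prod_one_add fun j _ => sq_nonneg (ξ j)
  calc (∑ j, ξ j ^ 2) * ∏ j, sinc (ξ j) ^ 2
      ≤ (∑ j, ξ j ^ 2) * ∏ j, (1 + ξ j ^ 2)⁻¹ := by
        gcongr with j
        exact sinc_sq_le_inv_one_add_sq (ξ j)
    _ = (∑ j, ξ j ^ 2) / ∏ j, (1 + ξ j ^ 2) := by rw [Finset.prod_inv_distrib, div_eq_mul_inv]
    _ ≤ 1 := by rw [div_le_one hprod]; linarith

theorem one_sub_exp_mul_sinc_prod_le_general (r : ℝ) (ℓ : ℕ) (ξ : Fin ℓ → ℝ) :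
    (1 - Real.exp (-(r ^ 2 * ∑ j, ξ j ^ 2))) * ∏ j, sinc (ξ j) ^ 2 ≤ r ^ 2 := by
  set S := ∑ j, ξ j ^ 2
  have hexp : 1 - Real.exp (-(r ^ 2 * S)) ≤ r ^ 2 * S := by
    linarith [Real.add_one_le_exp (-(r ^ 2 * S))]
  calc (1 - Real.exp (-(r ^ 2 * S))) * ∏ j, sinc (ξ j) ^ 2
      ≤ r ^ 2 * S * ∏ j, sinc (ξ j) ^ 2 := by gcongr
    _ = r ^ 2 * (S * ∏ j, sinc (ξ j) ^ 2) := by ring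
    _ ≤ r ^ 2 * 1 := by gcongr; exact sum_sq_mul_prod_sinc_sq_le_one ξ
    _ = r ^ 2 := mul_one _

theorem one_sub_exp_mul_sinc_prod_le (r : ℝ) (ℓ : ℕ) (hℓ : 1 ≤ ℓ) (ξ : Fin ℓ → ℝ) :
    (1 - Real.exp (-(r ^ 2 * ∑ j, ξ j ^ 2))) * ∏ j, sinc (ξ j) ^ 2 ≤ r ^ 2 :=
  one_sub_exp_mul_sinc_prod_le_general r ℓ ξ
end
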